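/- If G is a finite simple graph of order n with maximum degree Δ ≥ 1, then the lower packing number satisfies ρ_L(G) ≥ n/(Δ² + 1). -/

import Mathlib

/-!
A maximal packing `B` dominates the square `G²`: a vertex `v ∉ B` cannot be added to `B`, so some
closed neighbourhood `N[u]` contains `v` and a vertex `b ∈ B`, i.e. `v` is within distance two of
`b`. Each vertex has at most `1 + Δ·Δ` vertices within distance two, so `n ≤ (Δ² + 1)|B|`.
-/

open SimpleGraph Finset

variable {V : Type*}

/-- The closed neighborhood `N[v]` of a vertex `v`, as a `Finset`. -/
def closedNbrFinset (G : SimpleGraph V) [Fintype V] [DecidableEq V] [DecidableRel G.Adj]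
    (v : V) : Finset V :=
  insert v (G.neighborFinset v)

/-- `B` is a `k`-limited packing in `G`. -/
def IsLimitedPacking (G : SimpleGraph V) [Fintype V] [DecidableEq V] [DecidableRel G.Adj]
    (k : ℕ) (B : Finset V) : Prop :=
  ∀ v : V, (closedNbrFinset G v ∩ B).card ≤ k

/-- The lower `k`-limited packing number `L^ℓ_k(G)`: the minimum cardinality of a
`k`-limited packing that is maximal under inclusion among `k`-limited packings. -/
noncomputable def lowerLimitedPackingNumber (G : SimpleGraph V) [Fintype V] [DecidableEq V]
    [DecidableRel G.Adj] (k : ℕ) : ℕ :=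
  sInf {m | ∃ B : Finset V, Maximal (IsLimitedPacking G k) B ∧ B.card = m}

/-- The closed neighbourhood of `v` in the square `G²`: the vertices at distance at most two. -/
def closedNbrSqFinset (G : SimpleGraph V) [Fintype V] [DecidableEq V] [DecidableRel G.Adj]
    (v : V) : Finset V :=
  {w | (closedNbrFinset G v ∩ closedNbrFinset G w).Nonempty}

section closedNbr

variable (G : SimpleGraph V) [Fintype V] [DecidableEq V] [DecidableRel G.Adj]

theorem mem_closedNbrFinset {v w : V} : w ∈ closedNbrFinset G v ↔ w = v ∨ G.Adj v w := by
  rw [closedNbrFinset, mem_insert, mem_neighborFinset]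

theorem mem_closedNbrFinset_comm {v w : V} :
    w ∈ closedNbrFinset G v ↔ v ∈ closedNbrFinset G w := by
  simp only [mem_closedNbrFinset, eq_comm, G.adj_comm]

theorem self_mem_closedNbrFinset (v : V) : v ∈ closedNbrFinset G v :=
  mem_insert_self _ _

theorem card_closedNbrFinset (v : V) : (closedNbrFinset G v).card = G.degree v + 1 := by
  rw [closedNbrFinset, card_insert_of_notMem (G.notMem_neighborFinset_self v),
    card_neighborFinset_eq_degree]

theorem closedNbrSqFinset_subset (v : V) :
    closedNbrSqFinset G v ⊆
      insert v ((G.neighborFinset v).biUnion fun u => (closedNbrFinset G u).erase v) := by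
  intro w hw
  obtain ⟨u, hu⟩ := (mem_filter.1 hw).2
  obtain ⟨hvu, hwu⟩ := mem_inter.1 hu
  rw [mem_closedNbrFinset_comm] at hwu
  rw [mem_insert, mem_biUnion]
  by_cases hwv : w = v
  · exact Or.inl hwv
  refine Or.inr ?_
  rcases (mem_closedNbrFinset G).1 hvu with huv | hadj
  · subst huv
    rcases (mem_closedNbrFinset G).1 hwu with hwu | huw
    · exact absurd hwu hwv
    · exact ⟨w, (mem_neighborFinset G _ _).2 huw,
        mem_erase.2 ⟨hwv, self_mem_closedNbrFinset G w⟩⟩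
  · exact ⟨u, (mem_neighborFinset G _ _).2 hadj, mem_erase.2 ⟨hwv, hwu⟩⟩

theorem card_closedNbrSqFinset_le (v : V) :
    (closedNbrSqFinset G v).card ≤ G.maxDegree ^ 2 + 1 := by
  have hsummand :
      ∀ u ∈ G.neighborFinset v, ((closedNbrFinset G u).erase v).card ≤ G.maxDegree := by
    intro u hu
    have hvu : v ∈ closedNbrFinset G u :=
      (mem_closedNbrFinset G).2 (Or.inr ((mem_neighborFinset G _ _).1 hu).symm)
    rw [card_erase_of_mem hvu, card_closedNbrFinset, Nat.add_sub_cancel]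
    exact G.degree_le_maxDegree u
  calc (closedNbrSqFinset G v).card
      ≤ (G.neighborFinset v).card * G.maxDegree + 1 :=
        (card_le_card (closedNbrSqFinset_subset G v)).trans <|
          (card_insert_le _ _).trans <|
            Nat.add_le_add_right (card_biUnion_le_card_mul _ _ _ hsummand) 1
    _ ≤ G.maxDegree ^ 2 + 1 := by
        rw [card_neighborFinset_eq_degree, sq]
        gcongr
        exact G.degree_le_maxDegree v

end closedNbr

section packing

variable {G : SimpleGraph V} [Fintype V] [DecidableEq V] [DecidableRel G.Adj]

theorem isLimitedPacking_empty (k : ℕ) : IsLimitedPacking G k ∅ := fun v => by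
  simp only [inter_empty, card_empty, zero_le]

theorem exists_maximal_isLimitedPacking (k : ℕ) : ∃ B, Maximal (IsLimitedPacking G k) B :=
  Set.Finite.exists_maximal (Set.toFinite {B | IsLimitedPacking G k B})
    ⟨∅, isLimitedPacking_empty k⟩

theorem exists_card_eq_lowerLimitedPackingNumber (k : ℕ) :
    ∃ B, Maximal (IsLimitedPacking G k) B ∧ B.card = lowerLimitedPackingNumber G k :=
  have ⟨B, hB⟩ := exists_maximal_isLimitedPacking (G := G) k
  Nat.sInf_mem (s := {m | ∃ B : Finset V, Maximal (IsLimitedPacking G k) B ∧ B.card = m})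
    ⟨B.card, B, hB, rfl⟩

theorem exists_mem_closedNbrSqFinset_of_maximal_packing {B : Finset V}
    (hB : Maximal (IsLimitedPacking G 1) B) (v : V) : ∃ b ∈ B, v ∈ closedNbrSqFinset G b := by
  by_cases hvB : v ∈ B
  · exact ⟨v, hvB, mem_filter.2 ⟨mem_univ _, v, by simp only [mem_inter,
      self_mem_closedNbrFinset, and_self]⟩⟩
  have hnot : ¬ IsLimitedPacking G 1 (insert v B) := fun h =>
    hvB (hB.2 h (subset_insert _ _) (mem_insert_self v B))
  simp only [IsLimitedPacking, not_forall, not_le] at hnot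
  obtain ⟨u, hu⟩ := hnot
  have hvu : v ∈ closedNbrFinset G u := by
    by_contra h
    rw [inter_insert_of_notMem h] at hu
    exact (hB.1 u).not_gt hu
  -- `v` alone does not overflow `N[u]`, so `N[u]` already meets `B`.
  obtain ⟨b, hb⟩ : (closedNbrFinset G u ∩ B).Nonempty := by
    rw [nonempty_iff_ne_empty]
    rintro h
    rw [inter_insert_of_mem hvu, h, insert_empty, card_singleton] at hu
    exact lt_irrefl 1 hu
  obtain ⟨hbu, hbB⟩ := mem_inter.1 hb
  rw [mem_closedNbrFinset_comm] at hbu hvu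
  exact ⟨b, hbB, mem_filter.2 ⟨mem_univ _, u, mem_inter.2 ⟨hbu, hvu⟩⟩⟩

theorem card_le_card_mul_of_maximal_packing {B : Finset V}
    (hB : Maximal (IsLimitedPacking G 1) B) :
    Fintype.card V ≤ B.card * (G.maxDegree ^ 2 + 1) := by
  have hcover : univ ⊆ B.biUnion (closedNbrSqFinset G) := fun v _ => by
    simpa only [mem_biUnion] using exists_mem_closedNbrSqFinset_of_maximal_packing hB v
  calc Fintype.card V = (univ : Finset V).card := card_univ.symm
    _ ≤ (B.biUnion (closedNbrSqFinset G)).card := card_le_card hcover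
    _ ≤ B.card * (G.maxDegree ^ 2 + 1) :=
        card_biUnion_le_card_mul _ _ _ fun b _ => card_closedNbrSqFinset_le G b

end packing

theorem lowerPackingNumber_ge_general (G : SimpleGraph V) [Fintype V] [DecidableEq V]
    [DecidableRel G.Adj] :
    (lowerLimitedPackingNumber G 1 : ℝ) ≥
      (Fintype.card V : ℝ) / ((G.maxDegree : ℝ) ^ 2 + 1) := by
  obtain ⟨B, hB, hcard⟩ := exists_card_eq_lowerLimitedPackingNumber (G := G) 1
  rw [← hcard, ge_iff_le, div_le_iff₀ (by positivity)]
  exact_mod_cast card_le_card_mul_of_maximal_packing hB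

/-- A packing is a `1`-limited packing; the lower packing number `ρ_L(G)` is the
lower `1`-limited packing number.  If `G` has order `n` and maximum degree `Δ ≥ 1`,
then `ρ_L(G) ≥ n / (Δ² + 1)`. -/
theorem lowerPackingNumber_ge (G : SimpleGraph V) [Fintype V] [DecidableEq V]
    [DecidableRel G.Adj] (hΔ : 1 ≤ G.maxDegree) :
    (lowerLimitedPackingNumber G 1 : ℝ) ≥
      (Fintype.card V : ℝ) / ((G.maxDegree : ℝ) ^ 2 + 1) :=
  lowerPackingNumber_ge_general G
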